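/- arXiv:0711.1901 — 4 statements merged into one kernel-verified Lean document; each statement's English description precedes it below -/
import Mathlib

section
/- For every nonzero real binary quartic Q there exist M ∈ GL(2,ℝ) and c ∈ ℝ with c ≠ 0 such that c·(Q∘M) is one of the following canonical forms: X⁴ + μX²Y² + Y⁴ for some μ ∈ ℝ; X⁴ + μX²Y² − Y⁴ for some μ ∈ ℝ; X⁴ + X²Y²; X⁴ − X²Y²; X³Y; or X⁴. (This is the canonical-forms proposition: every rotationally symmetric conformal Killing tensor is equivalent under the group action to one of five representative families.) -/
/-!
Make the leading coefficient nonzero (otherwise send a point with `Q(t, 1) ≠ 0` to `[1 : 0]`) and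
remove the cubic term by a shift. A depressed quartic `X⁴ + cX²Y² + dXY³ + eY⁴` with `d ≠ 0`
splits over `ℝ` into two monic quadratic forms, using a positive root of Descartes' resolvent cubic.

Two binary quadratic forms `q₁, q₂` with positive resultant are simultaneously diagonalisable: the
discriminant of `s q₁ - t q₂` is a binary quadratic form in `(s, t)` of discriminant
`16 Res(q₁, q₂) > 0`, so the pencil has two degenerate members `σᵢ Lᵢ²`, and `q₁, q₂` are
combinations of `L₁², L₂²`. In the coordinates `(L₁, L₂)` the product `q₁ q₂` is then even,
`A X⁴ + C X²Y² + E Y⁴`, and rescaling `X`, `Y` and `Q` gives a canonical form.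

The resultant of the two monic factors is positive when one factor is definite, unless the factors
coincide (and then `q₁²` is even after completing the square). With four real roots, the resultants
of the three ways of pairing them sum to a sum of squares, so one is positive unless three roots
coincide, which gives `X³Y` or `X⁴`.
-/

def quarticEval (a b c d e X Y : ℝ) : ℝ :=
  a * X ^ 4 + b * X ^ 3 * Y + c * X ^ 2 * Y ^ 2 + d * X * Y ^ 3 + e * Y ^ 4

def quadraticEval (a b c X Y : ℝ) : ℝ :=
  a * X ^ 2 + b * X * Y + c * Y ^ 2

def IsCanonicalQuartic (F : ℝ → ℝ → ℝ) : Prop :=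
  (∃ μ : ℝ, ∀ X Y : ℝ, F X Y = X ^ 4 + μ * X ^ 2 * Y ^ 2 + Y ^ 4) ∨
  (∃ μ : ℝ, ∀ X Y : ℝ, F X Y = X ^ 4 + μ * X ^ 2 * Y ^ 2 - Y ^ 4) ∨
  (∀ X Y : ℝ, F X Y = X ^ 4 + X ^ 2 * Y ^ 2) ∨
  (∀ X Y : ℝ, F X Y = X ^ 4 - X ^ 2 * Y ^ 2) ∨
  (∀ X Y : ℝ, F X Y = X ^ 3 * Y) ∨
  (∀ X Y : ℝ, F X Y = X ^ 4)

def ReducesToCanonical (Q : ℝ → ℝ → ℝ) : Prop :=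
  ∃ α β γ δ c0 : ℝ, α * δ - β * γ ≠ 0 ∧ c0 ≠ 0 ∧
    IsCanonicalQuartic fun X Y => c0 * Q (α * X + β * Y) (γ * X + δ * Y)

theorem IsCanonicalQuartic.reducesToCanonical {F : ℝ → ℝ → ℝ} (hF : IsCanonicalQuartic F) :
    ReducesToCanonical F :=
  ⟨1, 0, 0, 1, 1, by norm_num, one_ne_zero, by simpa using hF⟩

namespace ReducesToCanonical

theorem of_eq {Q F : ℝ → ℝ → ℝ} (h : ∀ X Y, Q X Y = F X Y) (hF : ReducesToCanonical F) :
    ReducesToCanonical Q := by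
  rwa [show Q = F from funext₂ h]

theorem of_eq_mul_comp {Q F : ℝ → ℝ → ℝ} {k p q r s : ℝ} (hk : k ≠ 0)
    (hdet : p * s - q * r ≠ 0) (hQ : ∀ X Y, Q X Y = k * F (p * X + q * Y) (r * X + s * Y))
    (hF : ReducesToCanonical F) : ReducesToCanonical Q := by
  obtain ⟨α, β, γ, δ, c0, hαδ, hc0, hcan⟩ := hF
  set D := p * s - q * r
  refine ⟨(s * α - q * γ) / D, (s * β - q * δ) / D, (p * γ - r * α) / D, (p * δ - r * β) / D,
    c0 / k, ?_, div_ne_zero hc0 hk, ?_⟩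
  · have : (s * α - q * γ) / D * ((p * δ - r * β) / D) - (s * β - q * δ) / D * ((p * γ - r * α) / D)
        = (α * δ - β * γ) / D := by field_simp; ring
    rw [this]
    exact div_ne_zero hαδ hdet
  · convert hcan using 3 with X Y
    rw [hQ]
    have h1 : p * ((s * α - q * γ) / D * X + (s * β - q * δ) / D * Y)
        + q * ((p * γ - r * α) / D * X + (p * δ - r * β) / D * Y) = α * X + β * Y := by
      field_simp; ring
    have h2 : r * ((s * α - q * γ) / D * X + (s * β - q * δ) / D * Y)
        + s * ((p * γ - r * α) / D * X + (p * δ - r * β) / D * Y) = γ * X + δ * Y := by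
      field_simp; ring
    rw [h1, h2]
    field_simp

end ReducesToCanonical

theorem exists_mul_pow_eq_one_or_neg_one {x : ℝ} (hx : x ≠ 0) {n : ℕ} (hn : n ≠ 0) :
    ∃ t : ℝ, t ≠ 0 ∧ (x * t ^ n = 1 ∨ x * t ^ n = -1) := by
  have hpos : 0 < |x|⁻¹ := inv_pos.2 (abs_pos.2 hx)
  refine ⟨|x|⁻¹ ^ (n⁻¹ : ℝ), (Real.rpow_pos_of_pos hpos _).ne', ?_⟩
  rw [Real.rpow_inv_natCast_pow hpos.le hn]
  rcases abs_choice x with h | h <;> rw [h] <;> field_simp <;> simp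

theorem reducesToCanonical_monic_even (C E : ℝ) :
    ReducesToCanonical fun X Y => X ^ 4 + C * X ^ 2 * Y ^ 2 + E * Y ^ 4 := by
  by_cases hE : E = 0
  · by_cases hC : C = 0
    · refine IsCanonicalQuartic.reducesToCanonical ?_
      simp [hE, hC, IsCanonicalQuartic]
    obtain ⟨t, ht, hsign⟩ := exists_mul_pow_eq_one_or_neg_one hC two_ne_zero
    refine ReducesToCanonical.of_eq_mul_comp one_ne_zero (p := 1) (q := 0) (r := 0) (s := t⁻¹)
      (by simpa using ht) (fun X Y => ?_)
      (IsCanonicalQuartic.reducesToCanonical (F := fun X Y => X ^ 4 + C * t ^ 2 * X ^ 2 * Y ^ 2) ?_)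
    · simp only [hE]; field_simp; ring
    · rcases hsign with h | h
      · exact Or.inr (Or.inr (Or.inl fun X Y => by linear_combination X ^ 2 * Y ^ 2 * h))
      · exact Or.inr (Or.inr (Or.inr (Or.inl fun X Y => by linear_combination X ^ 2 * Y ^ 2 * h)))
  · obtain ⟨t, ht, hsign⟩ := exists_mul_pow_eq_one_or_neg_one hE four_ne_zero
    refine ReducesToCanonical.of_eq_mul_comp one_ne_zero (p := 1) (q := 0) (r := 0) (s := t⁻¹)
      (by simpa using ht) (fun X Y => ?_)
      (IsCanonicalQuartic.reducesToCanonical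
        (F := fun X Y => X ^ 4 + C * t ^ 2 * X ^ 2 * Y ^ 2 + E * t ^ 4 * Y ^ 4) ?_)
    · field_simp; ring
    · rcases hsign with h | h
      · exact Or.inl ⟨C * t ^ 2, fun X Y => by linear_combination Y ^ 4 * h⟩
      · exact Or.inr (Or.inl ⟨C * t ^ 2, fun X Y => by linear_combination Y ^ 4 * h⟩)

theorem reducesToCanonical_even_of_ne_zero {A : ℝ} (hA : A ≠ 0) (C E : ℝ) :
    ReducesToCanonical fun X Y => A * X ^ 4 + C * X ^ 2 * Y ^ 2 + E * Y ^ 4 :=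
  ReducesToCanonical.of_eq_mul_comp hA (p := 1) (q := 0) (r := 0) (s := 1) (by norm_num)
    (fun X Y => by field_simp; ring) (reducesToCanonical_monic_even (C / A) (E / A))

theorem reducesToCanonical_even {A C E : ℝ} (hne : A ≠ 0 ∨ C ≠ 0 ∨ E ≠ 0) :
    ReducesToCanonical fun X Y => A * X ^ 4 + C * X ^ 2 * Y ^ 2 + E * Y ^ 4 := by
  rcases ne_or_eq A 0 with hA | rfl
  · exact reducesToCanonical_even_of_ne_zero hA C E
  rcases ne_or_eq E 0 with hE | rfl
  · exact ReducesToCanonical.of_eq_mul_comp (p := 0) (q := 1) (r := 1) (s := 0) one_ne_zero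
      (by norm_num) (fun X Y => by ring) (reducesToCanonical_even_of_ne_zero hE C 0)
  have hC : C ≠ 0 := by simpa using hne
  -- `C X²Y² = C (u² - v²)²` for `u = (X + Y) / 2`, `v = (X - Y) / 2`
  exact ReducesToCanonical.of_eq_mul_comp (p := 1 / 2) (q := 1 / 2) (r := 1 / 2) (s := -1 / 2)
    one_ne_zero (by norm_num) (fun X Y => by ring) (reducesToCanonical_even_of_ne_zero hC (-2 * C) C)

theorem reducesToCanonical_sum_sq_mul_sum_sq {α₁ β₁ α₂ β₂ u₁ v₁ u₂ v₂ : ℝ}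
    (hu : u₁ * v₂ - v₁ * u₂ ≠ 0) (h₁ : α₁ ≠ 0 ∨ β₁ ≠ 0) (h₂ : α₂ ≠ 0 ∨ β₂ ≠ 0) :
    ReducesToCanonical fun X Y =>
      (α₁ * (u₁ * X + v₁ * Y) ^ 2 + β₁ * (u₂ * X + v₂ * Y) ^ 2) *
        (α₂ * (u₁ * X + v₁ * Y) ^ 2 + β₂ * (u₂ * X + v₂ * Y) ^ 2) := by
  refine ReducesToCanonical.of_eq_mul_comp one_ne_zero hu (fun X Y => by ring)
    (reducesToCanonical_even (A := α₁ * α₂) (C := α₁ * β₂ + α₂ * β₁) (E := β₁ * β₂) ?_)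
  by_contra! h
  obtain ⟨hαα, hαβ, hββ⟩ := h
  rcases h₁ with h₁ | h₁ <;> rcases h₂ with h₂ | h₂ <;> simp_all

section Resultant

variable {R : Type*} [CommRing R]

def quadraticResultant (a₁ b₁ c₁ a₂ b₂ c₂ : R) : R :=
  (a₁ * c₂ - a₂ * c₁) ^ 2 - (a₁ * b₂ - a₂ * b₁) * (b₁ * c₂ - b₂ * c₁)

theorem quadraticResultant_sum_sq (α₁ β₁ α₂ β₂ u₁ v₁ u₂ v₂ : R) :
    quadraticResultant (α₁ * u₁ ^ 2 + β₁ * u₂ ^ 2) (2 * (α₁ * u₁ * v₁ + β₁ * u₂ * v₂))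
        (α₁ * v₁ ^ 2 + β₁ * v₂ ^ 2) (α₂ * u₁ ^ 2 + β₂ * u₂ ^ 2)
        (2 * (α₂ * u₁ * v₁ + β₂ * u₂ * v₂)) (α₂ * v₁ ^ 2 + β₂ * v₂ ^ 2) =
      (α₁ * β₂ - α₂ * β₁) ^ 2 * (u₁ * v₂ - v₁ * u₂) ^ 4 := by
  unfold quadraticResultant; ring

theorem discrim_discrim_pencil (a₁ b₁ c₁ a₂ b₂ c₂ : R) :
    discrim (discrim a₁ b₁ c₁) (4 * a₁ * c₂ + 4 * a₂ * c₁ - 2 * b₁ * b₂) (discrim a₂ b₂ c₂) =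
      16 * quadraticResultant a₁ b₁ c₁ a₂ b₂ c₂ := by
  unfold discrim quadraticResultant; ring

theorem quadraticResultant_of_roots (x₁ x₂ x₃ x₄ : R) :
    quadraticResultant 1 (-(x₁ + x₂)) (x₁ * x₂) 1 (-(x₃ + x₄)) (x₃ * x₄) =
      (x₁ - x₃) * (x₁ - x₄) * (x₂ - x₃) * (x₂ - x₄) := by
  unfold quadraticResultant; ring

end Resultant

theorem exists_eq_mul_sq_of_discrim_eq_zero {K : Type*} [Field K] [NeZero (2 : K)] {a b c : K}
    (h : discrim a b c = 0) : ∃ σ u v : K, a = σ * u ^ 2 ∧ b = 2 * σ * u * v ∧ c = σ * v ^ 2 := by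
  unfold discrim at h
  by_cases ha : a = 0
  · have hb : b = 0 := by simpa [ha] using h
    exact ⟨c, 0, 1, by simp [ha], by simp [hb], by ring⟩
  · have h4 : (4 : K) ≠ 0 := by
      rw [show (4 : K) = 2 * 2 by norm_num]; exact mul_ne_zero two_ne_zero two_ne_zero
    refine ⟨(4 * a)⁻¹, 2 * a, b, by field_simp; ring, by field_simp; ring, ?_⟩
    field_simp
    linear_combination -h

theorem exists_independent_zeros_of_discrim_pos {a b c : ℝ} (h : 0 < discrim a b c) :
    ∃ s₁ t₁ s₂ t₂ : ℝ, s₁ * t₂ - t₁ * s₂ ≠ 0 ∧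
      quadraticEval a b c s₁ t₁ = 0 ∧ quadraticEval a b c s₂ t₂ = 0 := by
  unfold discrim at h
  by_cases ha : a = 0
  · have hb : b ≠ 0 := by rintro rfl; simp [ha] at h
    exact ⟨1, 0, -c, b, by simpa using hb, by simp [quadraticEval, ha], by
      simp only [quadraticEval, ha]; ring⟩
  · set r := Real.sqrt (b ^ 2 - 4 * a * c)
    have hr : r ^ 2 = b ^ 2 - 4 * a * c := Real.sq_sqrt h.le
    have hr0 : r ≠ 0 := (Real.sqrt_pos.2 h).ne'
    refine ⟨-b + r, 2 * a, -b - r, 2 * a, ?_, ?_, ?_⟩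
    · have : (-b + r) * (2 * a) - 2 * a * (-b - r) = 4 * a * r := by ring
      rw [this]; positivity
    · unfold quadraticEval; linear_combination a * hr
    · unfold quadraticEval; linear_combination a * hr

theorem exists_simultaneous_diagonalization {a₁ b₁ c₁ a₂ b₂ c₂ : ℝ}
    (h : 0 < quadraticResultant a₁ b₁ c₁ a₂ b₂ c₂) :
    ∃ α₁ β₁ α₂ β₂ u₁ v₁ u₂ v₂ : ℝ, u₁ * v₂ - v₁ * u₂ ≠ 0 ∧ α₁ * β₂ - α₂ * β₁ ≠ 0 ∧
      ∀ X Y : ℝ,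
        quadraticEval a₁ b₁ c₁ X Y = α₁ * (u₁ * X + v₁ * Y) ^ 2 + β₁ * (u₂ * X + v₂ * Y) ^ 2 ∧
        quadraticEval a₂ b₂ c₂ X Y = α₂ * (u₁ * X + v₁ * Y) ^ 2 + β₂ * (u₂ * X + v₂ * Y) ^ 2 := by
  obtain ⟨s₁, t₁, s₂, t₂, hst, hz₁, hz₂⟩ := exists_independent_zeros_of_discrim_pos
    ((discrim_discrim_pencil a₁ b₁ c₁ a₂ b₂ c₂).symm ▸ (by positivity) :
      0 < discrim (discrim a₁ b₁ c₁) (4 * a₁ * c₂ + 4 * a₂ * c₁ - 2 * b₁ * b₂) (discrim a₂ b₂ c₂))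
  have degenerate : ∀ s t, quadraticEval (discrim a₁ b₁ c₁) (4 * a₁ * c₂ + 4 * a₂ * c₁ - 2 * b₁ * b₂)
      (discrim a₂ b₂ c₂) s t = 0 →
      discrim (s * a₁ - t * a₂) (s * b₁ - t * b₂) (s * c₁ - t * c₂) = 0 := by
    intro s t hz
    rw [← hz]; unfold quadraticEval discrim; ring
  obtain ⟨σ₁, u₁, v₁, ha₁, hb₁, hc₁⟩ := exists_eq_mul_sq_of_discrim_eq_zero (degenerate _ _ hz₁)
  obtain ⟨σ₂, u₂, v₂, ha₂, hb₂, hc₂⟩ := exists_eq_mul_sq_of_discrim_eq_zero (degenerate _ _ hz₂)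
  set D := s₁ * t₂ - t₁ * s₂
  have solve : ∀ {x y m₁ m₂ : ℝ}, s₁ * x - t₁ * y = m₁ → s₂ * x - t₂ * y = m₂ →
      x = (t₂ * m₁ - t₁ * m₂) / D ∧ y = (s₂ * m₁ - s₁ * m₂) / D := by
    intro x y m₁ m₂ h₁ h₂
    constructor <;> field_simp
    · linear_combination t₂ * h₁ - t₁ * h₂
    · linear_combination s₂ * h₁ - s₁ * h₂
  obtain ⟨ha₁, ha₂⟩ := solve ha₁ ha₂
  obtain ⟨hb₁, hb₂⟩ := solve hb₁ hb₂
  obtain ⟨hc₁, hc₂⟩ := solve hc₁ hc₂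
  have hres : quadraticResultant a₁ b₁ c₁ a₂ b₂ c₂ =
      (t₂ * σ₁ / D * (-s₁ * σ₂ / D) - s₂ * σ₁ / D * (-t₁ * σ₂ / D)) ^ 2 *
        (u₁ * v₂ - v₁ * u₂) ^ 4 := by
    rw [← quadraticResultant_sum_sq]
    congr 1 <;> simp only [ha₁, ha₂, hb₁, hb₂, hc₁, hc₂] <;> ring
  rw [hres] at h
  refine ⟨t₂ * σ₁ / D, -t₁ * σ₂ / D, s₂ * σ₁ / D, -s₁ * σ₂ / D, u₁, v₁, u₂, v₂,
    fun h0 => by rw [h0] at h; simp at h, fun h0 => by rw [h0] at h; simp at h, fun X Y => ⟨?_, ?_⟩⟩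
  · simp only [quadraticEval, ha₁, hb₁, hc₁]; ring
  · simp only [quadraticEval, ha₂, hb₂, hc₂]; ring

theorem reducesToCanonical_mul_of_quadraticResultant_pos {a₁ b₁ c₁ a₂ b₂ c₂ : ℝ}
    (h : 0 < quadraticResultant a₁ b₁ c₁ a₂ b₂ c₂) :
    ReducesToCanonical fun X Y => quadraticEval a₁ b₁ c₁ X Y * quadraticEval a₂ b₂ c₂ X Y := by
  obtain ⟨α₁, β₁, α₂, β₂, u₁, v₁, u₂, v₂, hu, hαβ, hq⟩ := exists_simultaneous_diagonalization h
  refine ReducesToCanonical.of_eq (fun X Y => by rw [(hq X Y).1, (hq X Y).2])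
    (reducesToCanonical_sum_sq_mul_sum_sq hu ?_ ?_)
  · by_contra! h0; exact hαβ (by simp [h0.1, h0.2])
  · by_contra! h0; exact hαβ (by simp [h0.1, h0.2])

theorem quadraticResultant_pos_of_discrim_neg {p₁ q₁ p₂ q₂ : ℝ} (h : discrim 1 p₁ q₁ < 0)
    (hne : p₁ ≠ p₂ ∨ q₁ ≠ q₂) : 0 < quadraticResultant 1 p₁ q₁ 1 p₂ q₂ := by
  unfold discrim at h
  have key : 4 * quadraticResultant 1 p₁ q₁ 1 p₂ q₂ =
      (2 * (q₂ - q₁) - p₁ * (p₂ - p₁)) ^ 2 + (4 * q₁ - p₁ ^ 2) * (p₂ - p₁) ^ 2 := by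
    unfold quadraticResultant; ring
  rcases eq_or_ne p₁ p₂ with rfl | hp
  · have hq : 0 < (q₂ - q₁) ^ 2 := sq_pos_of_ne_zero (sub_ne_zero.2 (hne.resolve_left (by simp)).symm)
    nlinarith
  · have hp : 0 < (p₂ - p₁) ^ 2 := sq_pos_of_ne_zero (sub_ne_zero.2 hp.symm)
    nlinarith [mul_pos (by linarith : 0 < 4 * q₁ - p₁ ^ 2) hp, sq_nonneg (2 * (q₂ - q₁) - p₁ * (p₂ - p₁))]

theorem reducesToCanonical_cube_mul (r s : ℝ) :
    ReducesToCanonical fun X Y => (X - r * Y) ^ 3 * (X - s * Y) := by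
  rcases eq_or_ne r s with rfl | hrs
  · exact ReducesToCanonical.of_eq_mul_comp (F := fun X _ => X ^ 4) one_ne_zero (p := 1) (q := -r)
      (r := 0) (s := 1) (by norm_num) (fun X Y => by ring)
      (IsCanonicalQuartic.reducesToCanonical (by simp [IsCanonicalQuartic]))
  · exact ReducesToCanonical.of_eq_mul_comp (F := fun X Y => X ^ 3 * Y) one_ne_zero (p := 1) (q := -r)
      (r := 1) (s := -s) (by intro h; apply hrs; linarith) (fun X Y => by ring)
      (IsCanonicalQuartic.reducesToCanonical (by simp [IsCanonicalQuartic]))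

theorem exists_eq_cube_mul_of_prod_sub_eq_zero {x₁ x₂ x₃ x₄ : ℝ}
    (h₁ : (x₁ - x₂) * (x₃ - x₄) = 0) (h₂ : (x₁ - x₃) * (x₂ - x₄) = 0) :
    ∃ r s : ℝ, ∀ X Y : ℝ, (X - x₁ * Y) * (X - x₂ * Y) * (X - x₃ * Y) * (X - x₄ * Y) =
      (X - r * Y) ^ 3 * (X - s * Y) := by
  simp only [mul_eq_zero, sub_eq_zero] at h₁ h₂
  rcases h₁ with rfl | rfl <;> rcases h₂ with rfl | rfl
  · exact ⟨x₁, x₄, fun X Y => by ring⟩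
  · exact ⟨x₁, x₃, fun X Y => by ring⟩
  · exact ⟨x₁, x₂, fun X Y => by ring⟩
  · exact ⟨x₂, x₁, fun X Y => by ring⟩

theorem reducesToCanonical_prod_four_linear (x₁ x₂ x₃ x₄ : ℝ) :
    ReducesToCanonical fun X Y =>
      (X - x₁ * Y) * (X - x₂ * Y) * (X - x₃ * Y) * (X - x₄ * Y) := by
  have of_pairing : ∀ {y₁ y₂ y₃ y₄ : ℝ},
      (∀ X Y : ℝ, (X - x₁ * Y) * (X - x₂ * Y) * (X - x₃ * Y) * (X - x₄ * Y) =
        (X - y₁ * Y) * (X - y₂ * Y) * ((X - y₃ * Y) * (X - y₄ * Y))) →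
      0 < (y₁ - y₃) * (y₁ - y₄) * (y₂ - y₃) * (y₂ - y₄) →
      ReducesToCanonical fun X Y =>
        (X - x₁ * Y) * (X - x₂ * Y) * (X - x₃ * Y) * (X - x₄ * Y) := fun {y₁ y₂ y₃ y₄} hQ hR =>
    ReducesToCanonical.of_eq (fun X Y => (hQ X Y).trans (by unfold quadraticEval; ring))
      (reducesToCanonical_mul_of_quadraticResultant_pos
        ((quadraticResultant_of_roots y₁ y₂ y₃ y₄).symm ▸ hR))
  by_cases h₁₂ : 0 < (x₁ - x₃) * (x₁ - x₄) * (x₂ - x₃) * (x₂ - x₄)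
  · exact of_pairing (fun X Y => by ring) h₁₂
  by_cases h₁₃ : 0 < (x₁ - x₂) * (x₁ - x₄) * (x₃ - x₂) * (x₃ - x₄)
  · exact of_pairing (fun X Y => by ring) h₁₃
  by_cases h₁₄ : 0 < (x₁ - x₂) * (x₁ - x₃) * (x₄ - x₂) * (x₄ - x₃)
  · exact of_pairing (fun X Y => by ring) h₁₄
  have hsum : (x₁ - x₃) * (x₁ - x₄) * (x₂ - x₃) * (x₂ - x₄) +
      (x₁ - x₂) * (x₁ - x₄) * (x₃ - x₂) * (x₃ - x₄) + (x₁ - x₂) * (x₁ - x₃) * (x₄ - x₂) * (x₄ - x₃) =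
      (((x₁ - x₂) * (x₃ - x₄)) ^ 2 + ((x₁ - x₃) * (x₂ - x₄)) ^ 2 +
        ((x₁ - x₄) * (x₂ - x₃)) ^ 2) / 2 := by ring
  have hP₁ : ((x₁ - x₂) * (x₃ - x₄)) ^ 2 = 0 := by
    nlinarith [sq_nonneg ((x₁ - x₃) * (x₂ - x₄)), sq_nonneg ((x₁ - x₄) * (x₂ - x₃))]
  have hP₂ : ((x₁ - x₃) * (x₂ - x₄)) ^ 2 = 0 := by
    nlinarith [sq_nonneg ((x₁ - x₂) * (x₃ - x₄)), sq_nonneg ((x₁ - x₄) * (x₂ - x₃))]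
  obtain ⟨r, s, hrs⟩ := exists_eq_cube_mul_of_prod_sub_eq_zero (pow_eq_zero_iff two_ne_zero |>.1 hP₁)
    (pow_eq_zero_iff two_ne_zero |>.1 hP₂)
  exact ReducesToCanonical.of_eq hrs (reducesToCanonical_cube_mul r s)

theorem exists_roots_of_discrim_nonneg {p q : ℝ} (h : 0 ≤ discrim 1 p q) :
    ∃ x₁ x₂ : ℝ, ∀ X Y : ℝ, quadraticEval 1 p q X Y = (X - x₁ * Y) * (X - x₂ * Y) := by
  obtain ⟨r, hr⟩ : ∃ r : ℝ, r ^ 2 = p ^ 2 - 4 * q :=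
    ⟨_, by rw [Real.sq_sqrt h, discrim]; ring⟩
  exact ⟨(-p + r) / 2, (-p - r) / 2,
    fun X Y => by unfold quadraticEval; linear_combination Y ^ 2 * hr / 4⟩

theorem reducesToCanonical_mul_monic_of_discrim_neg {p₁ q₁ : ℝ} (h : discrim 1 p₁ q₁ < 0)
    (p₂ q₂ : ℝ) :
    ReducesToCanonical fun X Y => quadraticEval 1 p₁ q₁ X Y * quadraticEval 1 p₂ q₂ X Y := by
  by_cases hpq : p₁ = p₂ ∧ q₁ = q₂
  · obtain ⟨rfl, rfl⟩ := hpq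
    refine ReducesToCanonical.of_eq (fun X Y => ?_)
      (reducesToCanonical_sum_sq_mul_sum_sq (α₁ := 1) (β₁ := q₁ - p₁ ^ 2 / 4) (α₂ := 1)
        (β₂ := q₁ - p₁ ^ 2 / 4) (u₁ := 1) (v₁ := p₁ / 2) (u₂ := 0) (v₂ := 1) (by norm_num)
        (Or.inl one_ne_zero) (Or.inl one_ne_zero))
    unfold quadraticEval; ring
  · exact reducesToCanonical_mul_of_quadraticResultant_pos
      (quadraticResultant_pos_of_discrim_neg h (not_and_or.1 hpq))

theorem reducesToCanonical_mul_monic (p₁ q₁ p₂ q₂ : ℝ) :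
    ReducesToCanonical fun X Y => quadraticEval 1 p₁ q₁ X Y * quadraticEval 1 p₂ q₂ X Y := by
  rcases lt_or_ge (discrim 1 p₁ q₁) 0 with h₁ | h₁
  · exact reducesToCanonical_mul_monic_of_discrim_neg h₁ p₂ q₂
  rcases lt_or_ge (discrim 1 p₂ q₂) 0 with h₂ | h₂
  · exact ReducesToCanonical.of_eq (fun X Y => mul_comm _ _)
      (reducesToCanonical_mul_monic_of_discrim_neg h₂ p₁ q₁)
  obtain ⟨x₁, x₂, hx⟩ := exists_roots_of_discrim_nonneg h₁
  obtain ⟨x₃, x₄, hx'⟩ := exists_roots_of_discrim_nonneg h₂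
  exact ReducesToCanonical.of_eq (fun X Y => by rw [hx, hx']; ring)
    (reducesToCanonical_prod_four_linear x₁ x₂ x₃ x₄)

theorem exists_pos_resolvent_root (c e : ℝ) {d : ℝ} (hd : d ≠ 0) :
    ∃ z : ℝ, 0 < z ∧ z * ((z + c) ^ 2 - 4 * e) = d ^ 2 := by
  set f : ℝ → ℝ := fun z => z * ((z + c) ^ 2 - 4 * e) - d ^ 2
  set Z := |c| + 4 * |e| + d ^ 2 + 1
  have hf0 : f 0 < 0 := by
    simp only [f, zero_mul, zero_sub, neg_lt_zero]; positivity
  have hZ : 1 ≤ Z := by simp only [Z]; linarith [abs_nonneg c, abs_nonneg e, sq_nonneg d]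
  have hfZ : 0 < f Z := by
    have hZc : 4 * |e| + d ^ 2 + 1 ≤ Z + c := by simp only [Z]; linarith [neg_abs_le c]
    have hsq : 4 * e + d ^ 2 + 1 ≤ (Z + c) ^ 2 := by
      nlinarith [le_abs_self e, abs_nonneg e, sq_nonneg d]
    simp only [f]; nlinarith
  obtain ⟨z, hz, hfz⟩ := intermediate_value_Ioo (by linarith : (0 : ℝ) ≤ Z)
    (by fun_prop : Continuous f).continuousOn ⟨hf0, hfZ⟩
  exact ⟨z, hz.1, by simpa [f, sub_eq_zero] using hfz⟩

theorem exists_monic_factorization_of_depressed (c e : ℝ) {d : ℝ} (hd : d ≠ 0) :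
    ∃ p q₁ q₂ : ℝ, ∀ X Y : ℝ,
      quarticEval 1 0 c d e X Y = quadraticEval 1 p q₁ X Y * quadraticEval 1 (-p) q₂ X Y := by
  obtain ⟨z, hz, hres⟩ := exists_pos_resolvent_root c e hd
  set p := Real.sqrt z
  have hp : p ^ 2 = z := Real.sq_sqrt hz.le
  have hp0 : p ≠ 0 := (Real.sqrt_pos.2 hz).ne'
  refine ⟨p, (c + z - d / p) / 2, (c + z + d / p) / 2, fun X Y => ?_⟩
  have hdp : (d / p) ^ 2 = (c + z) ^ 2 - 4 * e := by
    rw [div_pow, hp, div_eq_iff hz.ne']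
    linear_combination -hres
  have he : (c + z - d / p) / 2 * ((c + z + d / p) / 2) = e := by linear_combination -hdp / 4
  have hpd : p * (d / p) = d := mul_div_cancel₀ d hp0
  unfold quarticEval quadraticEval
  linear_combination X ^ 2 * Y ^ 2 * hp - X * Y ^ 3 * hpd - Y ^ 4 * he

theorem reducesToCanonical_depressed (c d e : ℝ) :
    ReducesToCanonical (quarticEval 1 0 c d e) := by
  rcases eq_or_ne d 0 with rfl | hd
  · exact ReducesToCanonical.of_eq (fun X Y => by unfold quarticEval; ring)
      (reducesToCanonical_even (A := 1) (C := c) (E := e) (Or.inl one_ne_zero))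
  · obtain ⟨p, q₁, q₂, h⟩ := exists_monic_factorization_of_depressed c e hd
    exact ReducesToCanonical.of_eq h (reducesToCanonical_mul_monic p q₁ (-p) q₂)

theorem reducesToCanonical_of_leading_ne_zero {a b c d e : ℝ} (ha : a ≠ 0) :
    ReducesToCanonical (quarticEval a b c d e) := by
  set t := -b / (4 * a)
  -- the coefficients of `Q(X + tY, Y) / a`, whose `X³Y` coefficient `(4at + b) / a` vanishes
  refine ReducesToCanonical.of_eq_mul_comp ha (p := 1) (q := -t) (r := 0) (s := 1) (by norm_num)
    (fun X Y => ?_) (reducesToCanonical_depressed ((6 * a * t ^ 2 + 3 * b * t + c) / a)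
      ((4 * a * t ^ 3 + 3 * b * t ^ 2 + 2 * c * t + d) / a) (quarticEval a b c d e t 1 / a))
  simp only [t, quarticEval]
  field_simp
  ring

theorem exists_quarticEval_ne_zero {b c d e : ℝ} (h : ¬(b = 0 ∧ c = 0 ∧ d = 0 ∧ e = 0)) :
    ∃ t : ℝ, quarticEval 0 b c d e t 1 ≠ 0 := by
  by_contra! h0
  have h₀ := h0 0
  have h₁ := h0 1
  have hm₁ := h0 (-1)
  have h₂ := h0 2
  simp only [quarticEval] at h₀ h₁ hm₁ h₂
  exact h ⟨by linarith, by linarith, by linarith, by linarith⟩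

/-- Canonical forms: every nonzero real binary quartic can be brought, by a
`GL(2,ℝ)` substitution followed by multiplication by a nonzero scalar, to one
of the canonical forms `X⁴ + μX²Y² + Y⁴`, `X⁴ + μX²Y² − Y⁴`, `X⁴ + X²Y²`,
`X⁴ − X²Y²`, `X³Y` or `X⁴`. -/
theorem quartic_canonical_forms
    (a b c d e : ℝ) (hQ : ¬(a = 0 ∧ b = 0 ∧ c = 0 ∧ d = 0 ∧ e = 0)) :
    ∃ α β γ δ c0 : ℝ, α * δ - β * γ ≠ 0 ∧ c0 ≠ 0 ∧
      ((∃ μ : ℝ, ∀ X Y : ℝ,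
          c0 * quarticEval a b c d e (α * X + β * Y) (γ * X + δ * Y) =
            X ^ 4 + μ * X ^ 2 * Y ^ 2 + Y ^ 4) ∨
       (∃ μ : ℝ, ∀ X Y : ℝ,
          c0 * quarticEval a b c d e (α * X + β * Y) (γ * X + δ * Y) =
            X ^ 4 + μ * X ^ 2 * Y ^ 2 - Y ^ 4) ∨
       (∀ X Y : ℝ,
          c0 * quarticEval a b c d e (α * X + β * Y) (γ * X + δ * Y) =
            X ^ 4 + X ^ 2 * Y ^ 2) ∨
       (∀ X Y : ℝ,
          c0 * quarticEval a b c d e (α * X + β * Y) (γ * X + δ * Y) =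
            X ^ 4 - X ^ 2 * Y ^ 2) ∨
       (∀ X Y : ℝ,
          c0 * quarticEval a b c d e (α * X + β * Y) (γ * X + δ * Y) =
            X ^ 3 * Y) ∨
       (∀ X Y : ℝ,
          c0 * quarticEval a b c d e (α * X + β * Y) (γ * X + δ * Y) =
            X ^ 4)) := by
  change ReducesToCanonical (quarticEval a b c d e)
  rcases ne_or_eq a 0 with ha | rfl
  · exact reducesToCanonical_of_leading_ne_zero ha
  obtain ⟨t, ht⟩ := exists_quarticEval_ne_zero fun h => hQ ⟨rfl, h⟩
  -- after `(X, Y) ↦ (t X + Y, X)` the leading coefficient becomes `Q(t, 1) ≠ 0`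
  exact ReducesToCanonical.of_eq_mul_comp one_ne_zero (p := 0) (q := 1) (r := 1) (s := -t)
    (by norm_num) (fun X Y => by unfold quarticEval; ring)
    (reducesToCanonical_of_leading_ne_zero (b := 3 * b * t ^ 2 + 2 * c * t + d) (c := 3 * b * t + c)
      (d := b) (e := 0) ht)
end

section
/- Let (M₃₃, L₃, H, D₃, A₃₃) ∈ ℝ⁵, let a₀, a₁ ∈ ℝ and a₂, a₃ ∈ ℝ with a₂ ≠ 0, a₃ ≠ 0, and let (M̃₃₃, L̃₃, H̃, D̃₃, Ã₃₃) be given by the group action formulas. Define q(z) = M₃₃z⁴ + L₃z³ + Hz² + D₃z + A₃₃ and q̃(z) = M̃₃₃z⁴ + L̃₃z³ + H̃z² + D̃₃z + Ã₃₃. Then for every z ∈ ℝ with a₀z + 1 ≠ 0, (a₀z + 1)⁴ · q̃( ((a₂ + a₁a₀)z + a₁)/(a₀z + 1) ) = a₃a₂² · q(z). That is, q is a relative covariant (of weight two, up to the factor a₃) of the extended action restricted to the rotation axis. -/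
/-- The auxiliary quartic polynomial `P(t) = A₃₃t⁴ − D₃t³ + Ht² − L₃t + M₃₃`. -/
noncomputable def Pq (M33 L3 H D3 A33 : ℝ) : ℝ → ℝ :=
  fun t => A33 * t ^ 4 - D3 * t ^ 3 + H * t ^ 2 - L3 * t + M33

/-- `P⁽ⁿ⁾(t) = (1/n!) · (n`-th derivative of `P` at `t)`. -/
noncomputable def Pder (M33 L3 H D3 A33 : ℝ) (n : ℕ) (t : ℝ) : ℝ :=
  iteratedDeriv n (Pq M33 L3 H D3 A33) t / n.factorial

/-- The polynomial `q(z) = M₃₃z⁴ + L₃z³ + Hz² + D₃z + A₃₃`. -/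
def qpoly (M33 L3 H D3 A33 z : ℝ) : ℝ :=
  M33 * z ^ 4 + L3 * z ^ 3 + H * z ^ 2 + D3 * z + A33

/-! Write `P(t) = F(t, 1)` and `q(z) = F(-1, z)` for the binary quartic form
`F(x, y) = A₃₃x⁴ − D₃x³y + Hx²y² − L₃xy³ + M₃₃y⁴`. By Taylor's formula for `P` at `a₀`, the new
parameters are `a₃/a₂²` times the coefficients of `F ∘ g`, where
`g(x, y) = ((a₂ + a₀a₁)x + a₀y, a₁x + y)`. Since `g(-(a₀z + 1), (a₂ + a₁a₀)z + a₁) = (-a₂, a₂z)`,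
homogeneity of `F` of degree four gives the claim. -/

def quarticForm (M33 L3 H D3 A33 x y : ℝ) : ℝ :=
  A33 * x ^ 4 - D3 * x ^ 3 * y + H * x ^ 2 * y ^ 2 - L3 * x * y ^ 3 + M33 * y ^ 4

def quartic (a b c d e t : ℝ) : ℝ :=
  a * t ^ 4 + b * t ^ 3 + c * t ^ 2 + d * t + e

lemma deriv_quartic (a b c d e : ℝ) :
    deriv (quartic a b c d e) = quartic 0 (4 * a) (3 * b) (2 * c) d := by
  funext t
  have h : HasDerivAt (quartic a b c d e) (4 * a * t ^ 3 + 3 * b * t ^ 2 + 2 * c * t + d) t := by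
    refine ((((((hasDerivAt_pow 4 t).const_mul a).add ((hasDerivAt_pow 3 t).const_mul b)).add
      ((hasDerivAt_pow 2 t).const_mul c)).add ((hasDerivAt_id t).const_mul d)).add_const
      e).congr_deriv ?_
    push_cast
    ring
  rw [h.deriv, quartic]
  ring

section

variable (M33 L3 H D3 A33 : ℝ)

lemma Pq_eq_quartic : Pq M33 L3 H D3 A33 = quartic A33 (-D3) H (-L3) M33 := by
  funext t
  simp only [Pq, quartic]
  ring

lemma qpoly_eq_quarticForm (z : ℝ) :
    qpoly M33 L3 H D3 A33 z = quarticForm M33 L3 H D3 A33 (-1) z := by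
  simp only [qpoly, quarticForm]
  ring

lemma qpoly_mul_coeffs (c z : ℝ) :
    qpoly (c * M33) (c * L3) (c * H) (c * D3) (c * A33) z = c * qpoly M33 L3 H D3 A33 z := by
  simp only [qpoly]
  ring

lemma quarticForm_mul_mul (c x y : ℝ) :
    quarticForm M33 L3 H D3 A33 (c * x) (c * y) = c ^ 4 * quarticForm M33 L3 H D3 A33 x y := by
  simp only [quarticForm]
  ring

lemma quarticForm_add_taylor (a0 s u : ℝ) :
    quarticForm M33 L3 H D3 A33 (a0 * u + s) u =
      ∑ k ∈ Finset.range 5, Pder M33 L3 H D3 A33 k a0 * s ^ k * u ^ (4 - k) := by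
  simp only [Pder, Pq_eq_quartic, Finset.sum_range_succ, Finset.sum_range_zero, iteratedDeriv_succ',
    iteratedDeriv_zero, deriv_quartic, quartic, quarticForm, Nat.factorial]
  push_cast
  ring

lemma quarticForm_transform (a0 a1 a2 x y : ℝ) :
    quarticForm (Pder M33 L3 H D3 A33 0 a0)
      (-4 * a1 * Pder M33 L3 H D3 A33 0 a0 - a2 * Pder M33 L3 H D3 A33 1 a0)
      (6 * a1 ^ 2 * Pder M33 L3 H D3 A33 0 a0 + 3 * a1 * a2 * Pder M33 L3 H D3 A33 1 a0
        + a2 ^ 2 * Pder M33 L3 H D3 A33 2 a0)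
      (-4 * a1 ^ 3 * Pder M33 L3 H D3 A33 0 a0 - 3 * a1 ^ 2 * a2 * Pder M33 L3 H D3 A33 1 a0
        - 2 * a1 * a2 ^ 2 * Pder M33 L3 H D3 A33 2 a0 - a2 ^ 3 * Pder M33 L3 H D3 A33 3 a0)
      (a1 ^ 4 * Pder M33 L3 H D3 A33 0 a0 + a1 ^ 3 * a2 * Pder M33 L3 H D3 A33 1 a0
        + a1 ^ 2 * a2 ^ 2 * Pder M33 L3 H D3 A33 2 a0 + a1 * a2 ^ 3 * Pder M33 L3 H D3 A33 3 a0
        + a2 ^ 4 * Pder M33 L3 H D3 A33 4 a0) x y =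
      quarticForm M33 L3 H D3 A33 ((a2 + a0 * a1) * x + a0 * y) (a1 * x + y) := by
  rw [show (a2 + a0 * a1) * x + a0 * y = a0 * (a1 * x + y) + a2 * x by ring,
    quarticForm_add_taylor]
  simp only [Finset.sum_range_succ, Finset.sum_range_zero, quarticForm]
  ring

lemma qpoly_covariant_of_quarticForm_eq {M33' L3' H' D3' A33' a0 a1 a2 z : ℝ}
    (hF : ∀ x y, quarticForm M33' L3' H' D3' A33' x y =
      quarticForm M33 L3 H D3 A33 ((a2 + a0 * a1) * x + a0 * y) (a1 * x + y))
    (hz : a0 * z + 1 ≠ 0) :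
    (a0 * z + 1) ^ 4 * qpoly M33' L3' H' D3' A33' (((a2 + a1 * a0) * z + a1) / (a0 * z + 1)) =
      a2 ^ 4 * qpoly M33 L3 H D3 A33 z := by
  calc _ = quarticForm M33' L3' H' D3' A33' ((a0 * z + 1) * -1)
          ((a0 * z + 1) * (((a2 + a1 * a0) * z + a1) / (a0 * z + 1))) := by
        rw [qpoly_eq_quarticForm, quarticForm_mul_mul]
    _ = quarticForm M33 L3 H D3 A33 (a2 * -1) (a2 * z) := by
        rw [hF, mul_div_cancel₀ _ hz]
        congr 1 <;> ring
    _ = a2 ^ 4 * qpoly M33 L3 H D3 A33 z := by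
        rw [quarticForm_mul_mul, qpoly_eq_quarticForm]

end

theorem q_relative_covariant_general
    (M33 L3 H D3 A33 a0 a1 a2 a3 : ℝ) (ha2 : a2 ≠ 0)
    (M33' L3' H' D3' A33' : ℝ)
    (hM : M33' = a3 * Pder M33 L3 H D3 A33 0 a0 / a2 ^ 2)
    (hL : L3' = a3 * (-4 * a1 * Pder M33 L3 H D3 A33 0 a0
      - a2 * Pder M33 L3 H D3 A33 1 a0) / a2 ^ 2)
    (hH : H' = a3 * (6 * a1 ^ 2 * Pder M33 L3 H D3 A33 0 a0
      + 3 * a1 * a2 * Pder M33 L3 H D3 A33 1 a0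
      + a2 ^ 2 * Pder M33 L3 H D3 A33 2 a0) / a2 ^ 2)
    (hD : D3' = a3 * (-4 * a1 ^ 3 * Pder M33 L3 H D3 A33 0 a0
      - 3 * a1 ^ 2 * a2 * Pder M33 L3 H D3 A33 1 a0
      - 2 * a1 * a2 ^ 2 * Pder M33 L3 H D3 A33 2 a0
      - a2 ^ 3 * Pder M33 L3 H D3 A33 3 a0) / a2 ^ 2)
    (hA : A33' = a3 * (a1 ^ 4 * Pder M33 L3 H D3 A33 0 a0
      + a1 ^ 3 * a2 * Pder M33 L3 H D3 A33 1 a0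
      + a1 ^ 2 * a2 ^ 2 * Pder M33 L3 H D3 A33 2 a0
      + a1 * a2 ^ 3 * Pder M33 L3 H D3 A33 3 a0
      + a2 ^ 4 * Pder M33 L3 H D3 A33 4 a0) / a2 ^ 2) :
    ∀ z : ℝ, a0 * z + 1 ≠ 0 →
      (a0 * z + 1) ^ 4 *
        qpoly M33' L3' H' D3' A33' (((a2 + a1 * a0) * z + a1) / (a0 * z + 1)) =
      a3 * a2 ^ 2 * qpoly M33 L3 H D3 A33 z := by
  intro z hz
  have hcov := qpoly_covariant_of_quarticForm_eq M33 L3 H D3 A33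
    (quarticForm_transform M33 L3 H D3 A33 a0 a1 a2) hz
  subst hM hL hH hD hA
  simp only [mul_div_right_comm a3 _ (a2 ^ 2)]
  rw [qpoly_mul_coeffs, mul_left_comm, hcov]
  field_simp

/-- The polynomial `q` is a relative covariant (of weight two, up to the factor
`a₃`) of the extended group action restricted to the rotation axis:
`(a₀z + 1)⁴ · q̃(((a₂ + a₁a₀)z + a₁)/(a₀z + 1)) = a₃a₂² · q(z)`. -/
theorem q_relative_covariant
    (M33 L3 H D3 A33 a0 a1 a2 a3 : ℝ) (ha2 : a2 ≠ 0) (ha3 : a3 ≠ 0)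
    (M33' L3' H' D3' A33' : ℝ)
    (hM : M33' = a3 * Pder M33 L3 H D3 A33 0 a0 / a2 ^ 2)
    (hL : L3' = a3 * (-4 * a1 * Pder M33 L3 H D3 A33 0 a0
      - a2 * Pder M33 L3 H D3 A33 1 a0) / a2 ^ 2)
    (hH : H' = a3 * (6 * a1 ^ 2 * Pder M33 L3 H D3 A33 0 a0
      + 3 * a1 * a2 * Pder M33 L3 H D3 A33 1 a0
      + a2 ^ 2 * Pder M33 L3 H D3 A33 2 a0) / a2 ^ 2)
    (hD : D3' = a3 * (-4 * a1 ^ 3 * Pder M33 L3 H D3 A33 0 a0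
      - 3 * a1 ^ 2 * a2 * Pder M33 L3 H D3 A33 1 a0
      - 2 * a1 * a2 ^ 2 * Pder M33 L3 H D3 A33 2 a0
      - a2 ^ 3 * Pder M33 L3 H D3 A33 3 a0) / a2 ^ 2)
    (hA : A33' = a3 * (a1 ^ 4 * Pder M33 L3 H D3 A33 0 a0
      + a1 ^ 3 * a2 * Pder M33 L3 H D3 A33 1 a0
      + a1 ^ 2 * a2 ^ 2 * Pder M33 L3 H D3 A33 2 a0
      + a1 * a2 ^ 3 * Pder M33 L3 H D3 A33 3 a0
      + a2 ^ 4 * Pder M33 L3 H D3 A33 4 a0) / a2 ^ 2) :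
    ∀ z : ℝ, a0 * z + 1 ≠ 0 →
      (a0 * z + 1) ^ 4 *
        qpoly M33' L3' H' D3' A33' (((a2 + a1 * a0) * z + a1) / (a0 * z + 1)) =
      a3 * a2 ^ 2 * qpoly M33 L3 H D3 A33 z :=
  q_relative_covariant_general M33 L3 H D3 A33 a0 a1 a2 a3 ha2 M33' L3' H' D3' A33' hM hL hH hD hA
end

section
/- For a nonzero real binary quartic Q, the Hessian covariant H_Q is identically zero if and only if Q = c·ℓ⁴ for some real number c ≠ 0 and some nonzero real linear form ℓ(X,Y), i.e., if and only if Q has a quadruple root. -/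
/-!
The Hessian of `Q = aX⁴ + bX³Y + cX²Y² + dXY³ + eY⁴` is again a binary quartic, with coefficients
`24ac - 9b², 72ad - 12bc, 144ae + 18bd - 12c², 72be - 12cd, 24ce - 9d²`. If these vanish and
`a ≠ 0`, they successively force `c = 3b²/8a`, `d = b³/16a²`, `e = b⁴/256a³`, which are exactly the
coefficients of `a (X + (b/4a) Y)⁴`; if `a = 0` they force `b = c = d = 0`, so `Q = eY⁴`.
Conversely the Hessian of `c₀(pX + qY)⁴` vanishes by direct computation.
-/

/-- The real binary quartic `Q(X,Y) = aX⁴ + bX³Y + cX²Y² + dXY³ + eY⁴` as a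
function of two real variables. -/
def Qf (a b c d e : ℝ) : ℝ → ℝ → ℝ := fun X Y =>
  a * X ^ 4 + b * X ^ 3 * Y + c * X ^ 2 * Y ^ 2 + d * X * Y ^ 3 + e * Y ^ 4

/-- The Hessian covariant `H_Q = Q_XX·Q_YY − (Q_XY)²` of the binary quartic. -/
noncomputable def HessQ (a b c d e : ℝ) (X Y : ℝ) : ℝ :=
  deriv (fun x => deriv (fun x' => Qf a b c d e x' Y) x) X *
    deriv (fun y => deriv (fun y' => Qf a b c d e X y') y) Y -
  (deriv (fun y => deriv (fun x => Qf a b c d e x y) X) Y) ^ 2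

lemma HessQ_eq_Qf (a b c d e X Y : ℝ) :
    HessQ a b c d e X Y =
      Qf (24 * a * c - 9 * b ^ 2) (72 * a * d - 12 * b * c) (144 * a * e + 18 * b * d - 12 * c ^ 2)
        (72 * b * e - 12 * c * d) (24 * c * e - 9 * d ^ 2) X Y := by
  simp (disch := fun_prop) [HessQ, Qf]
  ring

lemma Qf_mul_linear_pow_four (c₀ p q X Y : ℝ) :
    c₀ * (p * X + q * Y) ^ 4 =
      Qf (c₀ * p ^ 4) (4 * c₀ * p ^ 3 * q) (6 * c₀ * p ^ 2 * q ^ 2) (4 * c₀ * p * q ^ 3) (c₀ * q ^ 4)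
        X Y := by
  simp only [Qf]
  ring

lemma Qf_coeffs_eq_of_forall_eq {a b c d e a' b' c' d' e' : ℝ}
    (h : ∀ X Y, Qf a b c d e X Y = Qf a' b' c' d' e' X Y) :
    a = a' ∧ b = b' ∧ c = c' ∧ d = d' ∧ e = e' := by
  have h₁ := h 1 0
  have h₂ := h 0 1
  have h₃ := h 1 1
  have h₄ := h 1 (-1)
  have h₅ := h 2 1
  simp only [Qf] at h₁ h₂ h₃ h₄ h₅
  norm_num at h₁ h₂ h₃ h₄ h₅
  refine ⟨by linear_combination h₁, ?_, ?_, ?_, by linear_combination h₂⟩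
  · linear_combination (h₅ - 12 * h₁ + 3 * h₂ - 3 * h₃ - h₄) / 6
  · linear_combination (h₃ + h₄) / 2 - h₁ - h₂
  · linear_combination 2 * h₁ - h₂ / 2 + h₃ - h₄ / 3 - h₅ / 6

lemma exists_eq_mul_linear_pow_four_of_hessian_coeffs {a b c d e : ℝ}
    (hQ : ¬(a = 0 ∧ b = 0 ∧ c = 0 ∧ d = 0 ∧ e = 0)) (hA : 24 * a * c - 9 * b ^ 2 = 0)
    (hB : 72 * a * d - 12 * b * c = 0) (hC : 144 * a * e + 18 * b * d - 12 * c ^ 2 = 0)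
    (hE : 24 * c * e - 9 * d ^ 2 = 0) :
    ∃ c₀ p q : ℝ, c₀ ≠ 0 ∧ (p, q) ≠ (0, 0) ∧ ∀ X Y, Qf a b c d e X Y = c₀ * (p * X + q * Y) ^ 4 := by
  by_cases ha : a = 0
  · subst ha
    obtain rfl : b = 0 := by nlinarith
    obtain rfl : c = 0 := by nlinarith
    obtain rfl : d = 0 := by nlinarith
    have he : e ≠ 0 := fun he ↦ hQ ⟨rfl, rfl, rfl, rfl, he⟩
    refine ⟨e, 0, 1, he, by simp, fun X Y ↦ ?_⟩
    simp only [Qf]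
    ring
  · refine ⟨a, 1, b / (4 * a), ha, by simp, fun X Y ↦ ?_⟩
    have hc : c = 3 * b ^ 2 / (8 * a) := by
      field_simp
      linear_combination hA / 3
    have hd : d = b ^ 3 / (16 * a ^ 2) := by
      rw [hc] at hB
      field_simp at hB ⊢
      linear_combination hB / 36
    have he : e = b ^ 4 / (256 * a ^ 3) := by
      rw [hc, hd] at hC
      field_simp at hC ⊢
      linear_combination hC / 576
    rw [Qf_mul_linear_pow_four, hc, hd, he]
    simp only [Qf]
    field_simp
    ring

/-- The Hessian covariant of a nonzero real binary quartic vanishes identically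
iff the quartic is a nonzero multiple of the fourth power of a real linear
form, i.e. iff it has a quadruple root. -/
theorem hessian_zero_iff_fourth_power
    (a b c d e : ℝ) (hQ : ¬(a = 0 ∧ b = 0 ∧ c = 0 ∧ d = 0 ∧ e = 0)) :
    (∀ X Y : ℝ, HessQ a b c d e X Y = 0) ↔
    ∃ c0 p q : ℝ, c0 ≠ 0 ∧ (p, q) ≠ (0, 0) ∧
      ∀ X Y : ℝ, Qf a b c d e X Y = c0 * (p * X + q * Y) ^ 4 := by
  constructor
  · intro hH
    have hzero : ∀ X Y, HessQ a b c d e X Y = Qf 0 0 0 0 0 X Y := fun X Y ↦ by simp [hH, Qf]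
    simp only [HessQ_eq_Qf] at hzero
    obtain ⟨hA, hB, hC, -, hE⟩ := Qf_coeffs_eq_of_forall_eq hzero
    exact exists_eq_mul_linear_pow_four_of_hessian_coeffs hQ hA hB hC hE
  · rintro ⟨c₀, p, q, -, -, hform⟩
    simp only [Qf_mul_linear_pow_four] at hform
    obtain ⟨rfl, rfl, rfl, rfl, rfl⟩ := Qf_coeffs_eq_of_forall_eq hform
    intro X Y
    rw [HessQ_eq_Qf]
    simp only [Qf]
    ring
end

section
/- Let K be a valence-two conformal Killing tensor on Euclidean ℝ³ with tr K(x) = 0 for all x, and suppose K is invariant under translations along the x₃-axis, i.e., ∂K/∂x₃ = 0 identically. Then K is equivalent to a Killing tensor: there exists a smooth function f : ℝ³ → ℝ such that K' := K + f·Id₃ satisfies the Killing tensor equation ∂ᵢK'ⱼₖ + ∂ⱼK'ₖᵢ + ∂ₖK'ᵢⱼ = 0 on ℝ³ for all i,j,k ∈ {1,2,3}. (This is the translational-symmetry case of the proposition that there are no R-separable webs in ℝ³ with translational symmetry other than the simply separable ones.) -/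
/-- The standard basis vectors of ℝ³. -/
def evec (i : Fin 3) : Fin 3 → ℝ := fun k => if k = i then 1 else 0

/-- Kronecker delta on `Fin 3`. -/
def kdelta (i j : Fin 3) : ℝ := if i = j then 1 else 0

/-- A trace-free conformal Killing tensor on Euclidean ℝ³ which is invariant
under translations along the `x₃`-axis is equivalent to a Killing tensor:
there is a smooth function `f` such that `K' = K + f·Id₃` satisfies the
Killing tensor equation `∂ᵢK'ⱼₖ + ∂ⱼK'ₖᵢ + ∂ₖK'ᵢⱼ = 0`. -/
theorem translation_invariant_tracefree_CKT_is_KT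
    (K : (Fin 3 → ℝ) → Matrix (Fin 3) (Fin 3) ℝ)
    (hsmooth : ∀ j k : Fin 3, ContDiff ℝ (⊤ : ℕ∞) fun x => K x j k)
    (hsymm : ∀ (x : Fin 3 → ℝ) (j k : Fin 3), K x j k = K x k j)
    (htrace : ∀ x : Fin 3 → ℝ, ∑ j : Fin 3, K x j j = 0)
    (hCKT : ∃ kk : (Fin 3 → ℝ) → Fin 3 → ℝ,
      (∀ i : Fin 3, ContDiff ℝ (⊤ : ℕ∞) fun x => kk x i) ∧
      ∀ (x : Fin 3 → ℝ) (i j k : Fin 3),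
        fderiv ℝ (fun y => K y j k) x (evec i) +
          fderiv ℝ (fun y => K y k i) x (evec j) +
          fderiv ℝ (fun y => K y i j) x (evec k) =
        kk x i * kdelta j k + kk x j * kdelta k i + kk x k * kdelta i j)
    (htransl : ∀ (x : Fin 3 → ℝ) (j k : Fin 3),
      fderiv ℝ (fun y => K y j k) x (evec 2) = 0) :
    ∃ f : (Fin 3 → ℝ) → ℝ, ContDiff ℝ (⊤ : ℕ∞) f ∧
      ∀ (x : Fin 3 → ℝ) (i j k : Fin 3),
        fderiv ℝ (fun y => K y j k + f y * kdelta j k) x (evec i) +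
          fderiv ℝ (fun y => K y k i + f y * kdelta k i) x (evec j) +
          fderiv ℝ (fun y => K y i j + f y * kdelta i j) x (evec k) = 0 := by
  obtain ⟨kk, -, hCK⟩ := hCKT
  have hdK : ∀ (a b : Fin 3) (x : Fin 3 → ℝ),
      DifferentiableAt ℝ (fun y => K y a b) x :=
    fun a b x => ((hsmooth a b).differentiable (by simp)) x
  -- kk is the gradient of K₃₃
  have hk : ∀ (x : Fin 3 → ℝ) (i : Fin 3),
      kk x i = fderiv ℝ (fun y => K y 2 2) x (evec i) := by
    intro x i
    have h := hCK x i 2 2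
    fin_cases i <;>
      simp [kdelta, htransl] at h ⊢ <;> linarith
  -- choose f = -K₃₃
  refine ⟨fun x => -(K x 2 2), (hsmooth 2 2).neg, ?_⟩
  intro x i j k
  have key : ∀ (a b : Fin 3) (v : Fin 3 → ℝ),
      fderiv ℝ (fun y => K y a b + -(K y 2 2) * kdelta a b) x v =
        fderiv ℝ (fun y => K y a b) x v -
          fderiv ℝ (fun y => K y 2 2) x v * kdelta a b := by
    intro a b v
    have hfun : (fun y => K y a b + -(K y 2 2) * kdelta a b) =
        fun y => K y a b - kdelta a b * K y 2 2 := by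
      funext y; ring
    rw [hfun, fderiv_fun_sub (hdK a b x) ((hdK 2 2 x).const_mul _),
      fderiv_const_mul (hdK 2 2 x)]
    simp [ContinuousLinearMap.sub_apply, smul_eq_mul]
    ring
  have h := hCK x i j k
  rw [hk x i, hk x j, hk x k] at h
  rw [key, key, key]
  linarith
end
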